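/- Every binary recurrent infinite word avoiding the formula f_e = AABCAAB.AABCAB.AABCB has the same set of factors as the Thue–Morse word (the fixed point of 0→01, 1→10). -/

import Mathlib

/-!
A recurrent word avoiding `f_e` is overlap-free: if `xyxyx` occurs, recurrence gives a gap `g`
with `xyxyx g xyxyx` a factor, and `A ↦ xy, B ↦ x, C ↦ g` is an occurrence of `f_e`.

In a binary overlap-free word, all positions `p ≥ 1` with `w p = w (p + 1)` have the same
parity: distances 1 and 3 between two of them produce the overlaps `aaa` and `baabaab`, and
any five consecutive letters contain such a position (otherwise they read `ababa`). So, after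
one or two letters, `w` is cut into the blocks `01`, `10`, i.e. it is the Thue–Morse image
`μ w'`, and `w'` is again overlap-free; it is recurrent because an occurrence of `μ v` past the
start must be aligned with the blocks. Induction on the length of factors (for one inclusion)
and on `m` (for the other) shows that the factors of `w` are the factors of the words `μᵐ(0)`,
which are the factors of the Thue–Morse word.
-/

/-- The finite factor of the infinite word `w` starting at position `i` of length `n`. -/
def extract {α : Type*} (w : ℕ → α) (i n : ℕ) : List α :=
  (List.range n).map (fun k => w (i + k))

/-- `u` is a (finite) factor of the infinite word `w`. -/
def IsFactorOf {α : Type*} (u : List α) (w : ℕ → α) : Prop :=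
  ∃ i, u = extract w i u.length

/-- A morphism (given on variables/letters) is non-erasing. -/
def NonErasing {V α : Type*} (h : V → List α) : Prop := ∀ v, h v ≠ []

/-- The image of a pattern `p` under the morphism induced by `h`. -/
def patImage {V α : Type*} (h : V → List α) (p : List V) : List α :=
  (p.map h).flatten

/-- `h` is an occurrence of the formula `f` (a set of fragments) in the infinite word `w`:
`h` is non-erasing and the `h`-image of every fragment of `f` is a factor of `w`. -/
def OccursIn {V α : Type*} (f : Set (List V)) (h : V → List α) (w : ℕ → α) : Prop :=
  NonErasing h ∧ ∀ p ∈ f, IsFactorOf (patImage h p) w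

/-- The infinite word `w` avoids the formula `f`. -/
def Avoids {V α : Type*} (w : ℕ → α) (f : Set (List V)) : Prop :=
  ∀ h : V → List α, ¬ OccursIn f h w

/-- An infinite word is recurrent if every factor occurs infinitely often. -/
def Recurrent {α : Type*} (w : ℕ → α) : Prop :=
  ∀ u : List α, IsFactorOf u w → ∀ N, ∃ i ≥ N, u = extract w i u.length

/-- An infinite word is square-free if it has no factor `uu` with `u` nonempty. -/
def SquareFree {α : Type*} (w : ℕ → α) : Prop :=
  ∀ u : List α, u ≠ [] → ¬ IsFactorOf (u ++ u) w

/-- The formula `f'` divides the formula `f`: some non-erasing morphism maps every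
fragment of `f'` to a factor of some fragment of `f`. -/
def Divides {V' V : Type*} (f' : Set (List V')) (f : Set (List V)) : Prop :=
  ∃ h : V' → List V, NonErasing h ∧ ∀ q ∈ f', ∃ p ∈ f, patImage h q <:+: p

/-- The avoidability index of a formula: the least alphabet size over which there is an
infinite word avoiding it. -/
noncomputable def lamIdx {V : Type*} (f : Set (List V)) : ℕ :=
  sInf {n : ℕ | ∃ w : ℕ → Fin n, Avoids w f}

/-- A formula is avoidable if some infinite word over some finite alphabet avoids it. -/
def Avoidable {V : Type*} (f : Set (List V)) : Prop :=
  ∃ (n : ℕ) (w : ℕ → Fin n), Avoids w f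

/-- An infinite word is `r`-free: every factor of the form `x ++ y ++ x` with `x ≠ []`
(a repetition of period `|xy|` and exponent `|xyx|/|xy|`) has exponent `< r`. -/
def AlphaFree {α : Type*} (w : ℕ → α) (r : ℝ) : Prop :=
  ∀ x y : List α, x ≠ [] → IsFactorOf (x ++ y ++ x) w →
    ((2 * x.length + y.length : ℝ) / (x.length + y.length)) < r

/-- An infinite word is `r⁺`-free: every such repetition has exponent `≤ r`. -/
def AlphaPlusFree {α : Type*} (w : ℕ → α) (r : ℝ) : Prop :=
  ∀ x y : List α, x ≠ [] → IsFactorOf (x ++ y ++ x) w →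
    ((2 * x.length + y.length : ℝ) / (x.length + y.length)) ≤ r

/-- A finite word is `r⁺`-free. -/
def AlphaPlusFreeList {α : Type*} (u : List α) (r : ℝ) : Prop :=
  ∀ x y : List α, x ≠ [] → (x ++ y ++ x) <:+: u →
    ((2 * x.length + y.length : ℝ) / (x.length + y.length)) ≤ r

/-- The formula f_e = AABCAAB.AABCAB.AABCB, with variables A=0, B=1, C=2. -/
def feFormula : Set (List (Fin 3)) :=
  {[0,0,1,2,0,0,1], [0,0,1,2,0,1], [0,0,1,2,1]}

/-- The Thue–Morse morphism 0→01, 1→10. -/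
def muTM : Fin 2 → List (Fin 2) := ![[0,1],[1,0]]

/-- `t` is the fixed point of 0→01, 1→10 starting with 0 (the Thue–Morse word). -/
def IsThueMorse (t : ℕ → Fin 2) : Prop :=
  t 0 = 0 ∧ ∀ n, [t (2 * n), t (2 * n + 1)] = muTM (t n)


section Words

variable {α : Type*} {w : ℕ → α}

@[simp] theorem length_extract (w : ℕ → α) (i n : ℕ) : (extract w i n).length = n := by
  simp [extract]

theorem extract_add (w : ℕ → α) (i m n : ℕ) :
    extract w i (m + n) = extract w i m ++ extract w (i + m) n := by
  simp only [extract, List.range_add, List.map_append, List.map_map]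
  congr 1
  exact List.map_congr_left fun k _ => by simp [Nat.add_assoc]

theorem extract_succ (w : ℕ → α) (i n : ℕ) :
    extract w i (n + 1) = w i :: extract w (i + 1) n := by
  rw [Nat.add_comm, extract_add]
  simp [extract]

theorem take_extract (w : ℕ → α) (i m n : ℕ) :
    (extract w i n).take m = extract w i (min m n) := by
  simp [extract, ← List.map_take, List.take_range]

theorem isFactorOf_extract (w : ℕ → α) (i n : ℕ) : IsFactorOf (extract w i n) w :=
  ⟨i, by simp⟩

theorem IsFactorOf.of_infix {u v : List α} (huv : u <:+: v) (hv : IsFactorOf v w) :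
    IsFactorOf u w := by
  obtain ⟨i, hi⟩ := hv
  obtain ⟨a, b, rfl⟩ := huv
  refine ⟨i + a.length, ?_⟩
  rw [List.length_append, List.length_append, extract_add, extract_add] at hi
  exact (List.append_inj (List.append_inj hi.symm (by simp)).1 (by simp)).2.symm

theorem extract_infix_extract {i n i' n' : ℕ} (h : i' ≤ i) (h' : i + n ≤ i' + n') :
    extract w i n <:+: extract w i' n' := by
  obtain ⟨d, rfl⟩ := Nat.exists_eq_add_of_le h
  obtain ⟨e, he⟩ := Nat.exists_eq_add_of_le (show d + n ≤ n' by omega)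
  rw [he, extract_add, extract_add]
  exact List.infix_append _ _ _

theorem Recurrent.exists_gap (hw : Recurrent w) {u : List α} (hu : IsFactorOf u w) :
    ∃ g ≠ [], IsFactorOf (u ++ g ++ u) w := by
  obtain ⟨i, hi⟩ := hu
  obtain ⟨i', hi', hu'⟩ := hw u ⟨i, hi⟩ (i + u.length + 1)
  refine ⟨extract w (i + u.length) (i' - (i + u.length)), ?_, i, ?_⟩
  · rw [← List.length_pos_iff, length_extract]
    omega
  · have hlen : i + (u.length + (i' - (i + u.length))) = i' := by omega
    simp only [List.length_append, length_extract, extract_add, hlen, ← hi, ← hu']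

end Words

section OverlapFree

variable {α : Type*} {w : ℕ → α}

def OverlapFree (w : ℕ → α) : Prop :=
  ∀ x y : List α, x ≠ [] → ¬ IsFactorOf (x ++ y ++ x ++ y ++ x) w

theorem Recurrent.overlapFree_of_avoids (hrec : Recurrent w) (hav : Avoids w feFormula) :
    OverlapFree w := by
  intro x y hx hxyxyx
  obtain ⟨g, hg, hocc⟩ := hrec.exists_gap hxyxyx
  refine hav ![x ++ y, x, g] ⟨fun v => by fin_cases v <;> simp [hx, hg], ?_⟩
  simp only [feFormula, Set.mem_insert_iff, Set.mem_singleton_iff, forall_eq_or_imp, forall_eq]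
  -- the images `xyxyx g xyxyx`, `xyxyx g xyx`, `xyxyx g x` are prefixes of the first
  refine ⟨hocc.of_infix ?_, hocc.of_infix ⟨[], y ++ x, ?_⟩,
    hocc.of_infix ⟨[], y ++ x ++ y ++ x, ?_⟩⟩
  all_goals simp [patImage]

theorem OverlapFree.exists_le_ne_add (hw : OverlapFree w) (i : ℕ) {p : ℕ} (hp : 0 < p) :
    ∃ k ≤ p, w (i + k) ≠ w (i + k + p) := by
  by_contra! hper
  obtain ⟨p, rfl⟩ : ∃ p', p = p' + 1 := ⟨p - 1, by omega⟩
  have hshift : extract w (i + (p + 1)) (p + 1) = extract w i (p + 1) :=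
    List.map_congr_left fun k hk => by
      rw [hper k (List.mem_range.mp hk).le]; congr 1; omega
  have hlast : w (i + (p + 1 + (p + 1))) = w i := by
    rw [← Nat.add_assoc, ← hper (p + 1) le_rfl]
    simpa using (hper 0 (Nat.zero_le _)).symm
  refine hw [w i] (extract w (i + 1) p) (List.cons_ne_nil _ _) ⟨i, ?_⟩
  have hlen : ([w i] ++ extract w (i + 1) p ++ [w i] ++ extract w (i + 1) p ++ [w i]).length
      = (p + 1) + (p + 1) + 1 := by
    simp only [List.length_append, List.length_singleton, length_extract]; omega
  rw [hlen, extract_add, extract_add, hshift, extract_succ w i p]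
  simp [extract, hlast]

end OverlapFree

section Morphisms

variable {α β : Type*} {w : ℕ → α} {w' : ℕ → β} {h : β → List α}

@[simp] theorem patImage_nil (h : β → List α) : patImage h [] = [] := rfl

@[simp] theorem patImage_cons (h : β → List α) (b : β) (u : List β) :
    patImage h (b :: u) = h b ++ patImage h u := by
  simp [patImage]

@[simp] theorem patImage_append (h : β → List α) (u v : List β) :
    patImage h (u ++ v) = patImage h u ++ patImage h v := by
  simp [patImage]

theorem patImage_infix (h : β → List α) {u v : List β} (huv : u <:+: v) :
    patImage h u <:+: patImage h v := by
  obtain ⟨a, b, rfl⟩ := huv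
  exact ⟨patImage h a, patImage h b, by simp⟩

theorem iterate_patImage_infix (h : α → List α) (m : ℕ) {u v : List α} (huv : u <:+: v) :
    (patImage h)^[m] u <:+: (patImage h)^[m] v := by
  induction m generalizing u v with
  | zero => exact huv
  | succ m ih => exact ih (patImage_infix h huv)

theorem patImage_ne_nil (hh : NonErasing h) {u : List β} (hu : u ≠ []) :
    patImage h u ≠ [] := by
  obtain ⟨b, u, rfl⟩ := List.exists_cons_of_ne_nil hu
  simp [hh b]

variable {s k : ℕ}

theorem extract_mul_eq_patImage (hblk : ∀ j, extract w (s + k * j) k = h (w' j)) (j n : ℕ) :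
    extract w (s + k * j) (k * n) = patImage h (extract w' j n) := by
  induction n generalizing j with
  | zero => simp [extract]
  | succ n ih =>
    rw [Nat.mul_succ, Nat.add_comm (k * n), extract_add, hblk, extract_succ, patImage_cons,
      ← ih (j + 1), Nat.mul_succ, Nat.add_assoc]

theorem IsFactorOf.patImage_of_blocks (hblk : ∀ j, extract w (s + k * j) k = h (w' j))
    {u : List β} (hu : IsFactorOf u w') : IsFactorOf (patImage h u) w := by
  obtain ⟨j, hj⟩ := hu
  have himg := extract_mul_eq_patImage hblk j u.length
  rw [← hj] at himg
  exact ⟨s + k * j, by rw [← himg, length_extract]⟩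

theorem OverlapFree.of_blocks (hw : OverlapFree w) (hh : NonErasing h)
    (hblk : ∀ j, extract w (s + k * j) k = h (w' j)) : OverlapFree w' := fun x y hx hfac =>
  hw (patImage h x) (patImage h y) (patImage_ne_nil hh hx) (by
    simpa only [patImage_append] using hfac.patImage_of_blocks hblk)

end Morphisms

local notation "μ" => patImage muTM

theorem muTM_eq (a : Fin 2) : muTM a = [a, a + 1] := by
  fin_cases a <;> rfl

theorem nonErasing_muTM : NonErasing muTM := fun a => by simp [muTM_eq]

@[simp] theorem length_patImage_muTM (u : List (Fin 2)) : (μ u).length = 2 * u.length := by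
  induction u with
  | nil => rfl
  | cons a u ih =>
    rw [patImage_cons, List.length_append, ih, muTM_eq, List.length_cons]
    simp only [List.length_cons, List.length_nil]
    omega

theorem patImage_muTM_injective : Function.Injective μ := by
  intro u
  induction u with
  | nil => intro v huv; cases v <;> simp_all [muTM_eq]
  | cons a u ih =>
    intro v huv
    cases v with
    | nil => simp [muTM_eq] at huv
    | cons b v =>
      simp only [patImage_cons, muTM_eq, List.cons_append, List.nil_append, List.cons.injEq] at huv
      rw [huv.1, ih huv.2.2]

theorem infix_iterate_three_of_length_le_two {u : List (Fin 2)} (hu : u.length ≤ 2) :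
    u <:+: μ^[3] [0] := by
  match u, hu with
  | [], _ => exact List.nil_infix
  | [a], _ => fin_cases a <;> decide
  | [a, b], _ => fin_cases a <;> fin_cases b <;> decide

section ThueMorse

variable {t : ℕ → Fin 2}

theorem IsThueMorse.extract_two_pow_mul (ht : IsThueMorse t) (m j n : ℕ) :
    extract t (2 ^ m * j) (2 ^ m * n) = μ^[m] (extract t j n) := by
  have hblk : ∀ j, extract t (0 + 2 * j) 2 = muTM (t j) := fun j => by
    simpa [extract, List.range_succ] using ht.2 j
  have hμ : ∀ j n, extract t (2 * j) (2 * n) = μ (extract t j n) := by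
    simpa using extract_mul_eq_patImage hblk
  induction m generalizing j n with
  | zero => simp
  | succ m ih =>
    rw [Function.iterate_succ_apply, pow_succ, Nat.mul_assoc, Nat.mul_assoc, ih, hμ]

theorem IsThueMorse.isFactorOf_iff (ht : IsThueMorse t) {u : List (Fin 2)} :
    IsFactorOf u t ↔ ∃ m, u <:+: μ^[m] [0] := by
  constructor
  · rintro ⟨i, hi⟩
    set n := u.length
    have hn : n < 2 ^ n := Nat.lt_two_pow_self
    have hdiv := Nat.div_add_mod i (2 ^ n)
    have hmod := Nat.mod_lt i (Nat.two_pow_pos n)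
    have hblock : u <:+: μ^[n] (extract t (i / 2 ^ n) 2) := by
      rw [← ht.extract_two_pow_mul, hi]
      exact extract_infix_extract (by omega) (by omega)
    refine ⟨n + 3, hblock.trans ?_⟩
    rw [Function.iterate_add_apply]
    exact iterate_patImage_infix _ _ (infix_iterate_three_of_length_le_two (by simp))
  · rintro ⟨m, hm⟩
    have hpre : extract t 0 (2 ^ m) = μ^[m] [0] := by
      simpa [extract, ht.1] using ht.extract_two_pow_mul m 0 1
    exact (isFactorOf_extract t 0 (2 ^ m)).of_infix (hpre ▸ hm)

end ThueMorse

namespace OverlapFree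

variable {w : ℕ → Fin 2} (hw : OverlapFree w)
include hw

theorem succ_ne_of_eq_succ {i : ℕ} (hi : w i = w (i + 1)) : w (i + 1) ≠ w (i + 2) := by
  intro hi'
  obtain ⟨k, hk, hne⟩ := hw.exists_le_ne_add i one_pos
  interval_cases k <;> simp only [Nat.add_assoc, Nat.reduceAdd, Nat.add_zero] at * <;> omega

theorem exists_lt_four_eq_succ (i : ℕ) : ∃ k < 4, w (i + k) = w (i + k + 1) := by
  by_contra! halt
  obtain ⟨k, hk, hne⟩ := hw.exists_le_ne_add i two_pos
  have := halt 0; have := halt 1; have := halt 2; have := halt 3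
  interval_cases k <;> simp only [Nat.add_assoc, Nat.reduceAdd, Nat.add_zero] at * <;> omega

theorem add_three_ne_of_eq_succ {i : ℕ} (heq : w (i + 1) = w (i + 2)) :
    w (i + 4) ≠ w (i + 5) := by
  intro heq'
  have : w i ≠ w (i + 1) := fun h => hw.succ_ne_of_eq_succ h heq
  have : w (i + 2) ≠ w (i + 3) := hw.succ_ne_of_eq_succ heq
  have : w (i + 3) ≠ w (i + 4) := fun h => hw.succ_ne_of_eq_succ h heq'
  have : w (i + 5) ≠ w (i + 6) := hw.succ_ne_of_eq_succ heq'
  obtain ⟨k, hk, hne⟩ := hw.exists_le_ne_add i three_pos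
  interval_cases k <;> simp only [Nat.add_assoc, Nat.reduceAdd, Nat.add_zero] at * <;> omega

theorem mod_two_eq_of_eq_succ {p q : ℕ} (hp : 1 ≤ p) (hq : 1 ≤ q)
    (hwp : w p = w (p + 1)) (hwq : w q = w (q + 1)) : p % 2 = q % 2 := by
  have near : ∀ {p q}, 1 ≤ p → p ≤ q → q ≤ p + 4 → w p = w (p + 1) →
      w q = w (q + 1) → p % 2 = q % 2 := by
    intro p q hp hpq hqp hwp hwq
    obtain ⟨p, rfl⟩ : ∃ p', p = p' + 1 := ⟨p - 1, by omega⟩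
    obtain ⟨k, hk, rfl⟩ : ∃ k ≤ 4, q = p + 1 + k := ⟨q - (p + 1), by omega, by omega⟩
    interval_cases k
    · rfl
    · exact absurd hwq (hw.succ_ne_of_eq_succ hwp)
    · omega
    · exact absurd hwq (hw.add_three_ne_of_eq_succ hwp)
    · omega
  wlog hpq : p ≤ q generalizing p q
  · exact (this hq hp hwq hwp (by omega)).symm
  induction q using Nat.strong_induction_on with
  | _ q ih =>
    by_cases hnear : q ≤ p + 4
    · exact near hp hpq hnear hwp hwq
    obtain ⟨k, hk, hwr⟩ := hw.exists_lt_four_eq_succ (q - 4)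
    exact (ih _ (by omega) (by omega) hwr (by omega)).trans
      (near (by omega) (by omega) (by omega) hwr hwq)

theorem exists_blocks : ∃ s, ∀ j, w (s + 2 * j) ≠ w (s + 2 * j + 1) := by
  obtain ⟨k, hk, hwp⟩ := hw.exists_lt_four_eq_succ 1
  refine ⟨(1 + k) % 2 + 1, fun j hj => ?_⟩
  have := hw.mod_two_eq_of_eq_succ (by omega) (by omega) hwp hj
  omega

theorem mod_two_eq_of_blocks {s q : ℕ} (hs : ∀ j, w (s + 2 * j) ≠ w (s + 2 * j + 1))
    (hsq : s < q) (hq : w q ≠ w (q + 1)) (hq' : w (q + 2) ≠ w (q + 3)) : q % 2 = s % 2 := by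
  -- otherwise `q - 1` and `q + 1` are block starts, and `w (q - 1) ⋯ w (q + 3)` alternates
  by_contra hne
  obtain ⟨k, hk, hwr⟩ := hw.exists_lt_four_eq_succ (q - 1)
  by_cases hr : (q - 1 + k) % 2 = s % 2
  · obtain ⟨j, hj⟩ : ∃ j, q - 1 + k = s + 2 * j := ⟨(q - 1 + k - s) / 2, by omega⟩
    exact hs j (hj ▸ hwr)
  · obtain h | h : q - 1 + k = q ∨ q - 1 + k = q + 2 := by omega
    · rw [h] at hwr
      exact hq hwr
    · rw [h] at hwr
      exact hq' hwr

end OverlapFree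

section Desubstitution

variable {w : ℕ → Fin 2}

theorem extract_two_eq_muTM {q : ℕ} (h : w q ≠ w (q + 1)) : extract w q 2 = muTM (w q) := by
  have hsucc : w (q + 1) = w q + 1 := by omega
  simp [extract, List.range_succ, muTM_eq, hsucc]

theorem ne_succ_of_extract_eq_patImage_muTM {q : ℕ} {V : List (Fin 2)}
    (hV : extract w q (2 * V.length) = μ V) {i : ℕ} (hi : i < V.length) :
    w (q + 2 * i) ≠ w (q + 2 * i + 1) := by
  induction V generalizing q i with
  | nil => simp at hi
  | cons a V ih =>
    rw [List.length_cons, Nat.mul_succ, extract_succ, extract_succ, patImage_cons, muTM_eq] at hV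
    simp only [List.cons_append, List.nil_append, List.cons.injEq] at hV
    obtain ⟨h0, h1, hV⟩ := hV
    cases i with
    | zero => simp [h0, h1]
    | succ i =>
      have := ih hV (i := i) (by simpa using hi)
      rwa [show q + 1 + 1 + 2 * i = q + 2 * (i + 1) by ring] at this

theorem Recurrent.of_blocks (hrec : Recurrent w) (hw : OverlapFree w) {s : ℕ}
    (hne : ∀ j, w (s + 2 * j) ≠ w (s + 2 * j + 1)) : Recurrent fun j => w (s + 2 * j) := by
  set w' := fun j => w (s + 2 * j)
  have hblk : ∀ j, extract w (s + 2 * j) 2 = muTM (w' j) := fun j => extract_two_eq_muTM (hne j)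
  rintro v ⟨j, hj⟩ N
  set V := extract w' j (v.length + 2)
  have hVlen : V.length = v.length + 2 := length_extract ..
  obtain ⟨q, hq, hqV⟩ :=
    hrec (μ V) ((isFactorOf_extract w' j _).patImage_of_blocks hblk) (s + 2 * N + 1)
  rw [length_patImage_muTM] at hqV
  have hpar : q % 2 = s % 2 := hw.mod_two_eq_of_blocks hne (by omega)
    (ne_succ_of_extract_eq_patImage_muTM hqV.symm (i := 0) (by omega))
    (ne_succ_of_extract_eq_patImage_muTM hqV.symm (i := 1) (by omega))
  obtain ⟨j', rfl⟩ : ∃ j', q = s + 2 * j' := ⟨(q - s) / 2, by omega⟩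
  have hV : V = extract w' j' V.length :=
    patImage_muTM_injective (by rw [hqV, extract_mul_eq_patImage hblk])
  refine ⟨j', by omega, ?_⟩
  calc v = V.take v.length := by rw [hj, take_extract]; simp
    _ = extract w' j' v.length := by rw [hV, take_extract]; simp [hVlen]

namespace OverlapFree

variable (hw : OverlapFree w)
include hw

theorem exists_desubstitution (hrec : Recurrent w) : ∃ (s : ℕ) (w' : ℕ → Fin 2),
    (∀ j, extract w (s + 2 * j) 2 = muTM (w' j)) ∧ OverlapFree w' ∧ Recurrent w' := by
  obtain ⟨s, hne⟩ := hw.exists_blocks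
  have hblk : ∀ j, extract w (s + 2 * j) 2 = muTM (w (s + 2 * j)) :=
    fun j => extract_two_eq_muTM (hne j)
  exact ⟨s, _, hblk, hw.of_blocks nonErasing_muTM hblk, hrec.of_blocks hw hne⟩

theorem isFactorOf_singleton (a : Fin 2) : IsFactorOf [a] w := by
  by_contra hnot
  have hall : ∀ i, w i ≠ a := fun i hi => hnot ⟨i, by simp [extract, hi]⟩
  have := hall 0; have := hall 1; have := hall 2
  exact hw.succ_ne_of_eq_succ (i := 0) (show w 0 = w 1 by omega) (show w 1 = w 2 by omega)

theorem isFactorOf_iterate (hrec : Recurrent w) (m : ℕ) : IsFactorOf (μ^[m] [0]) w := by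
  induction m generalizing w with
  | zero => exact hw.isFactorOf_singleton 0
  | succ m ih =>
    obtain ⟨s, w', hblk, hw', hrec'⟩ := hw.exists_desubstitution hrec
    rw [Function.iterate_succ_apply']
    exact (ih hw' hrec').patImage_of_blocks hblk

theorem exists_infix_iterate (hrec : Recurrent w) {u : List (Fin 2)} (hu : IsFactorOf u w) :
    ∃ m, u <:+: μ^[m] [0] := by
  induction hn : u.length using Nat.strong_induction_on generalizing w u with
  | _ n ih =>
    by_cases hn2 : n ≤ 2
    · exact ⟨3, infix_iterate_three_of_length_le_two (hn ▸ hn2)⟩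
    obtain ⟨s, w', hblk, hw', hrec'⟩ := hw.exists_desubstitution hrec
    obtain ⟨i, hi, hiu⟩ := hrec u hu s
    set j := (i - s) / 2
    have hsub : u <:+: μ (extract w' j (n / 2 + 1)) := by
      rw [← extract_mul_eq_patImage hblk, hiu, hn]
      exact extract_infix_extract (by omega) (by omega)
    obtain ⟨m, hm⟩ := ih (n / 2 + 1) (by omega) hw' hrec' (isFactorOf_extract w' j _)
      (length_extract ..)
    refine ⟨m + 1, hsub.trans ?_⟩
    rw [Function.iterate_succ_apply']
    exact patImage_infix _ hm

theorem isFactorOf_iff (hrec : Recurrent w) {u : List (Fin 2)} :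
    IsFactorOf u w ↔ ∃ m, u <:+: μ^[m] [0] :=
  ⟨hw.exists_infix_iterate hrec, fun ⟨m, hm⟩ => (hw.isFactorOf_iterate hrec m).of_infix hm⟩

end OverlapFree

end Desubstitution

/-- every binary recurrent infinite word avoiding
f_e = AABCAAB.AABCAB.AABCB has the same set of factors as the Thue–Morse word. -/
theorem stmt12 (t : ℕ → Fin 2) (ht : IsThueMorse t) (w : ℕ → Fin 2)
    (hrec : Recurrent w) (hav : Avoids w feFormula) :
    ∀ u : List (Fin 2), IsFactorOf u w ↔ IsFactorOf u t := fun _ =>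
  ((hrec.overlapFree_of_avoids hav).isFactorOf_iff hrec).trans ht.isFactorOf_iff.symm
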